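/- arXiv:2601.00409 — 8 statements merged into one kernel-verified Lean document; each statement's English description precedes it below -/
import Mathlib

section
/- Fix an integer N ≥ 1 and let A, B ∈ ℂ^{N×N} be positive semidefinite. Then the matrix convolution A ⋄ B is positive semidefinite. -/
/-!
With `T = addIncidence ℂ N`, the `0/1` matrix with `T i (k, m) = 1` iff `i = k + m`, the matrix
convolution is the compression `A ⋄ B = T (A ⊗ B) Tᴴ` of the Kronecker product. The Kronecker
product of positive semidefinite matrices is positive semidefinite, and so is every compression
`M ↦ T M Tᴴ` of a positive semidefinite matrix.
-/

open Matrix ComplexOrder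

/-- The matrix convolution (Jury product): with 0-based indices,
`(A ⋄ B) i j = ∑_{k ≤ i} ∑_{l ≤ j} A k l * B (i-k) (j-l)`
(the 1-based formula `(A⋄B)_{ij} = Σ_{k=1}^i Σ_{l=1}^j a_{kl} b_{i−k+1,j−l+1}`). -/
noncomputable def matConv {N : ℕ} (A B : Matrix (Fin N) (Fin N) ℂ) :
    Matrix (Fin N) (Fin N) ℂ :=
  Matrix.of fun i j => ∑ k : Fin N, ∑ l : Fin N,
    if k.1 ≤ i.1 ∧ l.1 ≤ j.1 then A k l * B (i - k) (j - l) else 0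

open scoped Kronecker

lemma Fin.val_eq_val_add_val_iff {N : ℕ} {i k m : Fin N} :
    i.val = k.val + m.val ↔ k ≤ i ∧ m = i - k := by
  constructor
  · intro h
    have hki : k ≤ i := Fin.le_def.mpr (by omega)
    exact ⟨hki, Fin.ext (by rw [Fin.sub_val_of_le hki]; omega)⟩
  · rintro ⟨hki, rfl⟩
    rw [Fin.sub_val_of_le hki]
    have := Fin.le_def.mp hki
    omega

def addIncidence (R : Type*) [Zero R] [One R] (N : ℕ) : Matrix (Fin N) (Fin N × Fin N) R :=
  of fun i km => if i.val = km.1.val + km.2.val then 1 else 0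

lemma sum_addIncidence_mul {R : Type*} [NonAssocSemiring R] {N : ℕ} (i : Fin N)
    (v : Fin N × Fin N → R) :
    ∑ q, addIncidence R N i q * v q = ∑ k : Fin N, if k ≤ i then v (k, i - k) else 0 := by
  simp only [addIncidence, of_apply, Fintype.sum_prod_type, ite_mul, one_mul, zero_mul,
    Fin.val_eq_val_add_val_iff, ite_and]
  refine Finset.sum_congr rfl fun k _ => ?_
  split_ifs <;> simp

lemma star_addIncidence_apply {R : Type*} [NonAssocSemiring R] [StarRing R] {N : ℕ}
    (i : Fin N) (q : Fin N × Fin N) :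
    star (addIncidence R N i q) = addIncidence R N i q := by
  simp only [addIncidence, of_apply]
  split_ifs <;> simp

theorem matConv_eq_addIncidence_mul_kronecker_mul {N : ℕ} (A B : Matrix (Fin N) (Fin N) ℂ) :
    matConv A B = addIncidence ℂ N * (A ⊗ₖ B) * (addIncidence ℂ N)ᴴ := by
  ext i j
  rw [matConv, of_apply]
  simp only [mul_apply, conjTranspose_apply, star_addIncidence_apply]
  simp_rw [mul_comm _ (addIncidence ℂ N j _), sum_addIncidence_mul, kronecker_apply]
  rw [Finset.sum_comm]
  simp only [Finset.ite_sum_zero, ← ite_and, Fin.le_def, and_comm]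

theorem matConv_posSemidef_general (N : ℕ)
    (A B : Matrix (Fin N) (Fin N) ℂ) (hA : A.PosSemidef) (hB : B.PosSemidef) :
    (matConv A B).PosSemidef := by
  rw [matConv_eq_addIncidence_mul_kronecker_mul]
  exact (hA.kronecker hB).mul_mul_conjTranspose_same _

/-- the matrix convolution of positive semidefinite matrices is
positive semidefinite. -/
theorem matConv_posSemidef (N : ℕ) (hN : 1 ≤ N)
    (A B : Matrix (Fin N) (Fin N) ℂ) (hA : A.PosSemidef) (hB : B.PosSemidef) :
    (matConv A B).PosSemidef :=
  matConv_posSemidef_general N A B hA hB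
end

section
/- Fix integers β, n ≥ 1 and nonzero matrices A, B ∈ ℂ^{n×β}. Then AA* ∘ BB* ≽ (1/min(rk AA*, rk BB*)) · d_{AB^T} d_{AB^T}* ≽ 0, where d_{AB^T} ∈ ℂ^n is the column vector of diagonal entries of AB^T. -/
/-!
Fix `x` and put `T = Aᵀ diag(x̄) B`. Then `x* (AA* ∘ BB*) x = ‖T‖_F²` and `x* d = tr T`, while
`rk T ≤ min (rk A) (rk B)`. So everything reduces to `|tr T|² ≤ rk T · ‖T‖_F²`, which is
Cauchy–Schwarz for the Frobenius pairing of `T` with the orthogonal projection `P` onto its column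
space: `tr T = tr (P T)` and `‖P‖_F² = tr P = rk T`.
-/

open Matrix ComplexOrder

lemma norm_sum_mul_sq_le {α R : Type*} [SeminormedRing R] (s : Finset α) (f g : α → R) :
    ‖∑ a ∈ s, f a * g a‖ ^ 2 ≤ (∑ a ∈ s, ‖f a‖ ^ 2) * ∑ a ∈ s, ‖g a‖ ^ 2 :=
  calc ‖∑ a ∈ s, f a * g a‖ ^ 2 ≤ (∑ a ∈ s, ‖f a‖ * ‖g a‖) ^ 2 := by
        gcongr
        exact (norm_sum_le _ _).trans (Finset.sum_le_sum fun a _ => norm_mul_le _ _)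
    _ ≤ (∑ a ∈ s, ‖f a‖ ^ 2) * ∑ a ∈ s, ‖g a‖ ^ 2 := Finset.sum_mul_sq_le_sq_mul_sq _ _ _

namespace Matrix

variable {𝕜 ι κ : Type*} [RCLike 𝕜] [Fintype ι] [Fintype κ]

lemma trace_conjTranspose_mul_self (A : Matrix ι κ 𝕜) :
    (Aᴴ * A).trace = ((∑ i, ∑ j, ‖A i j‖ ^ 2 : ℝ) : 𝕜) := by
  rw [Finset.sum_comm]
  simp [trace, mul_apply, RCLike.conj_mul]

section rangeProj

variable [DecidableEq ι]

/-- The orthogonal projection onto the column space of `T`, i.e. onto the span of the eigenvectors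
of `T * Tᴴ` with nonzero eigenvalue. -/
noncomputable def rangeProj (T : Matrix ι κ 𝕜) : Matrix ι ι 𝕜 :=
  let hH := isHermitian_mul_conjTranspose_self T
  (hH.eigenvectorUnitary : Matrix ι ι 𝕜) *
    diagonal (fun i => if hH.eigenvalues i = 0 then 0 else 1) *
      star (hH.eigenvectorUnitary : Matrix ι ι 𝕜)

variable (T : Matrix ι κ 𝕜)

lemma isHermitian_rangeProj : (rangeProj T).IsHermitian := by
  simp only [IsHermitian, rangeProj, conjTranspose_mul, diagonal_conjTranspose,
    star_eq_conjTranspose, conjTranspose_conjTranspose, mul_assoc]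
  congr 3
  ext i
  simp [apply_ite]

lemma rangeProj_mul_self : rangeProj T * rangeProj T = rangeProj T := by
  simp only [rangeProj, mul_assoc, ← mul_assoc (star _) _ _, Unitary.coe_star_mul_self, one_mul]
  simp +contextual [← mul_assoc, diagonal_mul_diagonal]

lemma rangeProj_mul_self_mul_conjTranspose : rangeProj T * (T * Tᴴ) = T * Tᴴ := by
  have hH := isHermitian_mul_conjTranspose_self T
  conv_lhs => rw [hH.spectral_theorem]
  conv_rhs => rw [hH.spectral_theorem]
  simp only [rangeProj, Unitary.conjStarAlgAut_apply, mul_assoc, ← mul_assoc (star _) _ _,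
    Unitary.coe_star_mul_self, one_mul]
  simp only [← mul_assoc, diagonal_mul_diagonal]
  congr 3
  ext i
  split_ifs with h <;> simp [h]

lemma rangeProj_mul : rangeProj T * T = T := by
  have h : ((1 - rangeProj T) * T) * ((1 - rangeProj T) * T)ᴴ = 0 := by
    rw [conjTranspose_mul, Matrix.mul_assoc, ← Matrix.mul_assoc T, ← Matrix.mul_assoc,
      Matrix.sub_mul, Matrix.one_mul, rangeProj_mul_self_mul_conjTranspose, sub_self,
      Matrix.zero_mul]
  rw [self_mul_conjTranspose_eq_zero, Matrix.sub_mul, Matrix.one_mul, sub_eq_zero] at h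
  exact h.symm

lemma trace_rangeProj : (rangeProj T).trace = T.rank := by
  rw [rangeProj, trace_mul_cycle, Unitary.coe_star_mul_self, one_mul, trace_diagonal,
    ← rank_self_mul_conjTranspose,
    (isHermitian_mul_conjTranspose_self T).rank_eq_card_non_zero_eigs, Fintype.card_subtype]
  simp [Finset.sum_ite]

lemma sum_norm_sq_rangeProj :
    ∑ i, ∑ j, ‖rangeProj T i j‖ ^ 2 = T.rank := by
  have hP : (rangeProj T)ᴴ * rangeProj T = rangeProj T := by
    rw [(isHermitian_rangeProj T).eq, rangeProj_mul_self]
  have h := trace_rangeProj T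
  rw [← hP, trace_conjTranspose_mul_self] at h
  exact_mod_cast h

end rangeProj

lemma norm_trace_sq_le_rank_mul (T : Matrix ι ι 𝕜) :
    ‖T.trace‖ ^ 2 ≤ T.rank * ∑ i, ∑ j, ‖T i j‖ ^ 2 := by
  classical
  have htr : T.trace = ∑ p : ι × ι, rangeProj T p.1 p.2 * T p.2 p.1 := by
    conv_lhs => rw [← rangeProj_mul T]
    simp [trace, mul_apply, Fintype.sum_prod_type]
  calc ‖T.trace‖ ^ 2
      ≤ (∑ p : ι × ι, ‖rangeProj T p.1 p.2‖ ^ 2) * ∑ p : ι × ι, ‖T p.2 p.1‖ ^ 2 :=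
        htr ▸ norm_sum_mul_sq_le _ _ _
    _ = T.rank * ∑ i, ∑ j, ‖T i j‖ ^ 2 := by
        simp only [Fintype.sum_prod_type, sum_norm_sq_rangeProj]
        rw [Finset.sum_comm]

section

variable [DecidableEq ι]

lemma star_dotProduct_hadamard_mulVec_eq_trace (A B : Matrix ι κ 𝕜) (x : ι → 𝕜) :
    star x ⬝ᵥ ((A * Aᴴ) ⊙ (B * Bᴴ)) *ᵥ x =
      ((Aᵀ * diagonal (star x) * B)ᴴ * (Aᵀ * diagonal (star x) * B)).trace := by
  rw [dotProduct_mulVec, dotProduct_vecMul_hadamard, trace_mul_comm, ← trace_transpose]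
  simp only [transpose_mul, conjTranspose_mul, transpose_transpose, diagonal_transpose,
    diagonal_conjTranspose, star_star, Matrix.mul_assoc]
  conv_rhs => rw [← Matrix.mul_assoc, trace_mul_comm]
  simp only [Matrix.mul_assoc]
  rfl

lemma star_dotProduct_diag_mul_transpose (A B : Matrix ι κ 𝕜) (x : ι → 𝕜) :
    star x ⬝ᵥ (A * Bᵀ).diag = (Aᵀ * diagonal (star x) * B).trace := by
  rw [Matrix.mul_assoc]
  simp only [dotProduct, diag, trace, mul_apply, transpose_apply, Pi.star_apply, Finset.mul_sum,
    diagonal_apply, ite_mul, zero_mul, Finset.sum_ite_eq, Finset.mem_univ, if_true]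
  rw [Finset.sum_comm]
  exact Finset.sum_congr rfl fun _ _ => Finset.sum_congr rfl fun _ _ => by ring

end

theorem posSemidef_hadamard_sub_inv_min_rank_smul_vecMulVec (A B : Matrix ι κ 𝕜) :
    ((A * Aᴴ) ⊙ (B * Bᴴ) - ((min (A * Aᴴ).rank (B * Bᴴ).rank : ℕ) : 𝕜)⁻¹ •
      vecMulVec (A * Bᵀ).diag (star (A * Bᵀ).diag)).PosSemidef := by
  classical
  set m := min (A * Aᴴ).rank (B * Bᴴ).rank
  set d := (A * Bᵀ).diag
  have hM := (posSemidef_self_mul_conjTranspose A).hadamard (posSemidef_self_mul_conjTranspose B)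
  refine posSemidef_iff_dotProduct_mulVec.mpr
    ⟨hM.isHermitian.sub ((posSemidef_vecMulVec_self_star d).isHermitian.smul ?_), fun x => ?_⟩
  · simp [IsSelfAdjoint]
  set T := Aᵀ * diagonal (star x) * B
  have hrank : T.rank ≤ m := by
    refine le_min ?_ ?_
    · rw [rank_self_mul_conjTranspose, ← rank_transpose A]
      exact (rank_mul_le_left _ _).trans (rank_mul_le_left _ _)
    · rw [rank_self_mul_conjTranspose]
      exact rank_mul_le_right _ _
  have hquad :
      star x ⬝ᵥ ((A * Aᴴ) ⊙ (B * Bᴴ)) *ᵥ x = ((∑ i, ∑ j, ‖T i j‖ ^ 2 : ℝ) : 𝕜) := by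
    rw [star_dotProduct_hadamard_mulVec_eq_trace, trace_conjTranspose_mul_self]
  have hdiag : star x ⬝ᵥ vecMulVec d (star d) *ᵥ x = ((‖T.trace‖ ^ 2 : ℝ) : 𝕜) := by
    rw [vecMulVec_mulVec, op_smul_eq_smul, dotProduct_smul, star_dotProduct,
      star_dotProduct_diag_mul_transpose, smul_eq_mul, RCLike.star_def, RCLike.conj_mul]
    push_cast
    rfl
  have hkey : ‖T.trace‖ ^ 2 ≤ m * ∑ i, ∑ j, ‖T i j‖ ^ 2 :=
    (norm_trace_sq_le_rank_mul T).trans (by gcongr)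
  rw [sub_mulVec, dotProduct_sub, smul_mulVec, dotProduct_smul, hquad, hdiag, smul_eq_mul,
    ← RCLike.ofReal_natCast, ← RCLike.ofReal_inv, ← RCLike.ofReal_mul, ← RCLike.ofReal_sub,
    RCLike.ofReal_nonneg, sub_nonneg]
  -- also covers `m = 0`, where the junk value `m⁻¹ = 0` leaves the Schur product theorem
  exact inv_mul_le_of_le_mul₀ (Nat.cast_nonneg m) (by positivity) hkey

end Matrix

theorem hadamard_loewner_lower_bound_general (n β : ℕ)
    (A B : Matrix (Fin n) (Fin β) ℂ) :
    (Matrix.hadamard (A * Aᴴ) (B * Bᴴ) -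
        (((min (A * Aᴴ).rank (B * Bᴴ).rank : ℕ) : ℂ))⁻¹ •
          vecMulVec (fun i : Fin n => (A * Bᵀ) i i)
            (star fun i : Fin n => (A * Bᵀ) i i)).PosSemidef ∧
    (vecMulVec (fun i : Fin n => (A * Bᵀ) i i)
        (star fun i : Fin n => (A * Bᵀ) i i)).PosSemidef :=
  ⟨posSemidef_hadamard_sub_inv_min_rank_smul_vecMulVec A B, posSemidef_vecMulVec_self_star _⟩

/-- Novak–Vybíral–Khare: for nonzero `A B : ℂ^{n×β}`,
`AA* ∘ BB* ≽ (1/min(rk AA*, rk BB*)) d d* ≽ 0` where `d` is the diagonal of `ABᵀ`. -/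
theorem hadamard_loewner_lower_bound (n β : ℕ) (hn : 1 ≤ n) (hβ : 1 ≤ β)
    (A B : Matrix (Fin n) (Fin β) ℂ) (hA : A ≠ 0) (hB : B ≠ 0) :
    (Matrix.hadamard (A * Aᴴ) (B * Bᴴ) -
        (((min (A * Aᴴ).rank (B * Bᴴ).rank : ℕ) : ℂ))⁻¹ •
          vecMulVec (fun i : Fin n => (A * Bᵀ) i i)
            (star fun i : Fin n => (A * Bᵀ) i i)).PosSemidef ∧
    (vecMulVec (fun i : Fin n => (A * Bᵀ) i i)
        (star fun i : Fin n => (A * Bᵀ) i i)).PosSemidef :=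
  hadamard_loewner_lower_bound_general n β A B
end

section
/- For all integers n, β ≥ 1 and every integer r with 1 ≤ r ≤ min(n, β), there exist matrices A, B ∈ ℂ^{n×β} with rk(AA*) = rk(BB*) = r and a vector u ∈ ℂ^n such that u*(AA* ∘ BB*)u = (1/r)·|d_{AB^T}* u|² and this common value is nonzero. In particular, the coefficient 1/min(rk AA*, rk BB*) in the lower bound AA* ∘ BB* ≽ (1/min(rk AA*, rk BB*)) d_{AB^T} d_{AB^T}* cannot be replaced by any larger constant uniformly over all A, B. -/
open Matrix ComplexOrder

/-!
Take `A = B` to be the `n × β` matrix with ones in the first `r` diagonal positions and zeros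
elsewhere. Its entries are real, so `A Aᴴ = A Bᵀ = D`, the diagonal `0/1` projection onto the
first `r` coordinates, and `D ∘ D = D`. For `u = (1, …, 1)` both `u* (D ∘ D) u` and `d_D* u`
equal `r`, hence `u* (A Aᴴ ∘ B Bᴴ) u = r = r⁻¹ |d_{ABᵀ}* u|²`.
-/

section PartialIdentity

variable (R : Type*) (n β r : ℕ)

def prefixIndicator [Zero R] [One R] : Fin n → R := fun i => if (i : ℕ) < r then 1 else 0

def partialIdentity [Zero R] [One R] : Matrix (Fin n) (Fin β) R :=
  of fun i j => if (i : ℕ) = j ∧ (i : ℕ) < r then 1 else 0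

variable {R n β r}

theorem prefixIndicator_mul_self [MulZeroOneClass R] :
    prefixIndicator R n r * prefixIndicator R n r = prefixIndicator R n r := by
  ext i
  by_cases h : (i : ℕ) < r <;> simp [prefixIndicator, h]

theorem star_prefixIndicator [NonAssocSemiring R] [StarRing R] :
    star (prefixIndicator R n r) = prefixIndicator R n r := by
  ext i
  by_cases h : (i : ℕ) < r <;> simp [prefixIndicator, h]

theorem sum_prefixIndicator [AddCommMonoidWithOne R] (h : r ≤ n) :
    ∑ i, prefixIndicator R n r i = r := by
  simp [prefixIndicator, Finset.sum_boole, Fin.card_filter_val_lt, h]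

theorem rank_diagonal_prefixIndicator [Field R] (h : r ≤ n) :
    (diagonal (prefixIndicator R n r)).rank = r := by
  classical
  rw [rank_diagonal, Fintype.card_subtype]
  simpa [prefixIndicator] using Fin.card_filter_val_lt.trans (min_eq_right h)

theorem conjTranspose_partialIdentity [NonAssocSemiring R] [StarRing R] :
    (partialIdentity R n β r)ᴴ = (partialIdentity R n β r)ᵀ := by
  ext i j
  simp only [partialIdentity, conjTranspose_apply, transpose_apply, of_apply]
  split_ifs <;> simp

theorem partialIdentity_mul_transpose [NonAssocSemiring R] (h : r ≤ β) :
    partialIdentity R n β r * (partialIdentity R n β r)ᵀ = diagonal (prefixIndicator R n r) := by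
  refine Matrix.ext fun i k => ?_
  rw [Matrix.mul_apply, diagonal_apply, prefixIndicator]
  by_cases hi : (i : ℕ) < r
  · rw [Fintype.sum_eq_single ⟨i, hi.trans_le h⟩ fun j hj => ?_]
    · by_cases hik : i = k
      · subst hik
        simp [partialIdentity, hi]
      · simp [partialIdentity, hik, Fin.val_eq_val, Ne.symm hik]
    · have hij : (i : ℕ) ≠ j := fun hij => hj (Fin.ext hij.symm)
      simp [partialIdentity, hij]
  · simp [partialIdentity, hi]

theorem partialIdentity_mul_conjTranspose [NonAssocSemiring R] [StarRing R] (h : r ≤ β) :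
    partialIdentity R n β r * (partialIdentity R n β r)ᴴ = diagonal (prefixIndicator R n r) := by
  rw [conjTranspose_partialIdentity, partialIdentity_mul_transpose h]

end PartialIdentity

theorem star_one_dotProduct_diagonal_mulVec_one {ι R : Type*} [Fintype ι] [DecidableEq ι]
    [NonAssocSemiring R] [StarRing R] (w : ι → R) :
    star 1 ⬝ᵥ diagonal w *ᵥ 1 = ∑ i, w i := by
  simp [mulVec_diagonal, one_dotProduct]

theorem hadamard_lower_bound_sharp_general (n β r : ℕ)
    (hr : 1 ≤ r) (hrm : r ≤ min n β) :
    ∃ (A B : Matrix (Fin n) (Fin β) ℂ) (u : Fin n → ℂ),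
      (A * Aᴴ).rank = r ∧ (B * Bᴴ).rank = r ∧
      star u ⬝ᵥ (Matrix.hadamard (A * Aᴴ) (B * Bᴴ)).mulVec u
        = ((r : ℂ))⁻¹ * ((‖(star fun i : Fin n => (A * Bᵀ) i i) ⬝ᵥ u‖ ^ 2 : ℝ) : ℂ) ∧
      star u ⬝ᵥ (Matrix.hadamard (A * Aᴴ) (B * Bᴴ)).mulVec u ≠ 0 := by
  obtain ⟨hrn, hrβ⟩ := le_min_iff.mp hrm
  set A := partialIdentity ℂ n β r
  have hAA : A * Aᴴ = diagonal (prefixIndicator ℂ n r) := partialIdentity_mul_conjTranspose hrβ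
  have hrank : (A * Aᴴ).rank = r := by rw [hAA, rank_diagonal_prefixIndicator hrn]
  have hquad : star 1 ⬝ᵥ (A * Aᴴ) ⊙ (A * Aᴴ) *ᵥ 1 = r := by
    rw [hAA, diagonal_hadamard_diagonal, prefixIndicator_mul_self,
      star_one_dotProduct_diagonal_mulVec_one, sum_prefixIndicator hrn]
  have hdiag : (star fun i => (A * Aᵀ) i i) ⬝ᵥ 1 = r := by
    simp only [A, partialIdentity_mul_transpose hrβ, diagonal_apply_eq]
    rw [star_prefixIndicator, dotProduct_one, sum_prefixIndicator hrn]
  have hr0 : (r : ℂ) ≠ 0 := Nat.cast_ne_zero.mpr (by omega)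
  refine ⟨A, A, 1, hrank, hrank, ?_, hquad ▸ hr0⟩
  rw [hquad, hdiag, Complex.norm_natCast]
  push_cast
  field_simp

/-- sharpness of the constant `1/min(rk AA*, rk BB*)` in the
Hadamard-product lower bound: for each `1 ≤ r ≤ min n β` there are `A, B` of the
corresponding ranks and a vector `u` attaining equality with nonzero value. -/
theorem hadamard_lower_bound_sharp (n β r : ℕ) (hn : 1 ≤ n) (hβ : 1 ≤ β)
    (hr : 1 ≤ r) (hrm : r ≤ min n β) :
    ∃ (A B : Matrix (Fin n) (Fin β) ℂ) (u : Fin n → ℂ),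
      (A * Aᴴ).rank = r ∧ (B * Bᴴ).rank = r ∧
      star u ⬝ᵥ (Matrix.hadamard (A * Aᴴ) (B * Bᴴ)).mulVec u
        = ((r : ℂ))⁻¹ * ((‖(star fun i : Fin n => (A * Bᵀ) i i) ⬝ᵥ u‖ ^ 2 : ℝ) : ℂ) ∧
      star u ⬝ᵥ (Matrix.hadamard (A * Aᴴ) (B * Bᴴ)).mulVec u ≠ 0 :=
  hadamard_lower_bound_sharp_general n β r hr hrm
end

section
/- Let m, n, β ≥ 1 be integers. Then for nonzero matrices A ∈ ℂ^{m×β} and B ∈ ℂ^{n×β}, one has AA* ⊗ BB* ≽ (1/min(rk AA*, rk BB*)) · vec(BA^T) vec(BA^T)* ≽ 0. -/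
open Matrix Kronecker ComplexOrder

/-!
Put `K = A ⊗ B`, so that `AA* ⊗ BB* = KK*` and `vec(BAᵀ) = K vec(1)`. For a test vector
`x = vec X` one has `K* x = vec C` with `C = B* X Ā`, so the two quadratic forms are `tr(C*C)` and
`|tr C|²`, and `rk C ≤ min(rk A, rk B)`. Finally `|tr C|² ≤ rk C · tr(C*C)`: if `P` is the
orthogonal projection onto the range of `C`, then `tr C = tr(P* C)`, and Cauchy–Schwarz for the
Frobenius inner product gives `|tr(P* C)|² ≤ tr(P* P) tr(C* C)` with `tr(P* P) = tr P = rk C`.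
-/

namespace Matrix

variable {𝕜 m n k : Type*} [RCLike 𝕜] [Fintype m] [Fintype n] [Fintype k]

theorem norm_trace_conjTranspose_mul_sq_le (P C : Matrix n n 𝕜) :
    ‖(Pᴴ * C).trace‖ ^ 2 ≤ RCLike.re (Pᴴ * P).trace * RCLike.re (Cᴴ * C).trace := by
  have h := inner_mul_inner_self_le (𝕜 := 𝕜) (WithLp.toLp 2 (vec P)) (WithLp.toLp 2 (vec C))
  simp only [EuclideanSpace.inner_toLp_toLp, dotProduct_comm _ (star _),
    star_vec_dotProduct_vec] at h
  have hswap : ‖(Cᴴ * P).trace‖ = ‖(Pᴴ * C).trace‖ := by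
    rw [← norm_star, ← trace_conjTranspose, conjTranspose_mul, conjTranspose_conjTranspose]
  rwa [hswap, ← sq] at h

theorem exists_isStarProjection_mul_eq_self_and_trace_eq_rank [DecidableEq n]
    (C : Matrix n n 𝕜) :
    ∃ P : Matrix n n 𝕜, IsStarProjection P ∧ P * C = C ∧ P.trace = C.rank := by
  set K := LinearMap.range (toEuclideanLin C)
  refine ⟨(toEuclideanCLM (n := n) (𝕜 := 𝕜)).symm K.starProjection,
    isStarProjection_starProjection.map (toEuclideanCLM (n := n) (𝕜 := 𝕜)).symm.toStarAlgHom,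
    ?_, ?_⟩
  · apply EquivLike.injective (toEuclideanCLM (n := n) (𝕜 := 𝕜))
    rw [map_mul, StarAlgEquiv.apply_symm_apply]
    ext1 x
    exact Submodule.starProjection_eq_self_iff.mpr (LinearMap.mem_range_self (toEuclideanLin C) _)
  · have hproj : LinearMap.IsProj K (K.starProjection : _ →ₗ[𝕜] _) :=
      ⟨K.starProjection_apply_mem, fun x hx => Submodule.starProjection_eq_self_iff.mpr hx⟩
    rw [rank_eq_finrank_range_toLin C (EuclideanSpace.basisFun n 𝕜).toBasis
      (EuclideanSpace.basisFun n 𝕜).toBasis, ← toEuclideanLin_eq_toLin_orthonormal, ← hproj.trace,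
      LinearMap.trace_eq_matrix_trace 𝕜 (EuclideanSpace.basisFun n 𝕜).toBasis]
    rfl

theorem norm_trace_sq_le_rank_mul_re_trace [DecidableEq n] (C : Matrix n n 𝕜) :
    ‖C.trace‖ ^ 2 ≤ C.rank * RCLike.re (Cᴴ * C).trace := by
  obtain ⟨P, hP, hPC, hPtr⟩ := C.exists_isStarProjection_mul_eq_self_and_trace_eq_rank
  have hPH : Pᴴ = P := hP.isSelfAdjoint
  have hPP : Pᴴ * P = P := by rw [hPH]; exact hP.isIdempotentElem
  calc ‖C.trace‖ ^ 2 = ‖(Pᴴ * C).trace‖ ^ 2 := by rw [hPH, hPC]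
    _ ≤ RCLike.re (Pᴴ * P).trace * RCLike.re (Cᴴ * C).trace :=
      norm_trace_conjTranspose_mul_sq_le P C
    _ = C.rank * RCLike.re (Cᴴ * C).trace := by rw [hPP, hPtr, RCLike.natCast_re]

theorem inv_natCast_smul_star_trace_mul_trace_le [DecidableEq n] (C : Matrix n n 𝕜) {r : ℕ}
    (hr : C.rank ≤ r) : (r : 𝕜)⁻¹ • (star C.trace * C.trace) ≤ (Cᴴ * C).trace := by
  have hreal : (RCLike.re (Cᴴ * C).trace : 𝕜) = (Cᴴ * C).trace := RCLike.conj_eq_iff_re.mp <| by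
    rw [← RCLike.star_def, ← trace_conjTranspose, conjTranspose_mul, conjTranspose_conjTranspose]
  have hnonneg : 0 ≤ RCLike.re (Cᴴ * C).trace :=
    (RCLike.nonneg_iff.mp (posSemidef_conjTranspose_mul_self C).trace_nonneg).1
  have key : ‖C.trace‖ ^ 2 ≤ r * RCLike.re (Cᴴ * C).trace :=
    C.norm_trace_sq_le_rank_mul_re_trace.trans
      (mul_le_mul_of_nonneg_right (by exact_mod_cast hr) hnonneg)
  rw [← hreal, RCLike.star_def, RCLike.conj_mul, smul_eq_mul, ← RCLike.ofReal_pow,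
    ← RCLike.ofReal_natCast, ← RCLike.ofReal_inv, ← RCLike.ofReal_mul, RCLike.ofReal_le_ofReal]
  exact inv_mul_le_of_le_mul₀ r.cast_nonneg hnonneg key

theorem star_dotProduct_mul_conjTranspose_mulVec (K : Matrix m k 𝕜) (x : m → 𝕜) :
    star x ⬝ᵥ (K * Kᴴ) *ᵥ x = star (Kᴴ *ᵥ x) ⬝ᵥ Kᴴ *ᵥ x := by
  rw [← mulVec_mulVec, dotProduct_mulVec, star_mulVec, conjTranspose_conjTranspose]

theorem star_dotProduct_vecMulVec_mulVec (v x : m → 𝕜) :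
    star x ⬝ᵥ vecMulVec v (star v) *ᵥ x = star (star v ⬝ᵥ x) * (star v ⬝ᵥ x) := by
  rw [vecMulVec_mulVec, dotProduct_smul, star_dotProduct, star_star, MulOpposite.smul_eq_mul_unop,
    MulOpposite.unop_op, dotProduct_comm]

theorem posSemidef_kronecker_sub_inv_rank_smul_vecMulVec_vec [DecidableEq k]
    (A : Matrix m k 𝕜) (B : Matrix n k 𝕜) :
    ((A * Aᴴ) ⊗ₖ (B * Bᴴ) - ((min A.rank B.rank : ℕ) : 𝕜)⁻¹ •
      vecMulVec (vec (B * Aᵀ)) (star (vec (B * Aᵀ)))).PosSemidef := by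
  set K := A ⊗ₖ B
  set r : ℕ := min A.rank B.rank
  have hK : (A * Aᴴ) ⊗ₖ (B * Bᴴ) = K * Kᴴ := by rw [conjTranspose_kronecker, mul_kronecker_mul]
  have hv : vec (B * Aᵀ) = K *ᵥ vec 1 := by rw [kronecker_mulVec_vec, Matrix.mul_one]
  rw [hK]
  refine .of_dotProduct_mulVec_nonneg ?_ fun x => ?_
  · have hr : IsSelfAdjoint ((r : 𝕜)⁻¹) := (IsSelfAdjoint.natCast r).inv₀
    exact (isHermitian_mul_conjTranspose_self K).sub <|
      (posSemidef_vecMulVec_self_star _).isHermitian.smul hr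
  set C := Bᴴ * of (fun p i => x (i, p)) * Aᴴᵀ
  have hKx : Kᴴ *ᵥ x = vec C := by
    rw [conjTranspose_kronecker, ← kronecker_mulVec_vec]; rfl
  have htr : star (vec (B * Aᵀ)) ⬝ᵥ x = C.trace := by
    rw [hv, star_mulVec, ← dotProduct_mulVec, hKx, star_vec_dotProduct_vec, conjTranspose_one,
      Matrix.one_mul]
  have hrank : C.rank ≤ r := le_min
    ((rank_mul_le_right _ _).trans_eq (by rw [rank_transpose, rank_conjTranspose]))
    ((rank_mul_le_left _ _).trans ((rank_mul_le_left _ _).trans_eq (rank_conjTranspose B)))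
  rw [sub_mulVec, dotProduct_sub, smul_mulVec, dotProduct_smul,
    star_dotProduct_mul_conjTranspose_mulVec, star_dotProduct_vecMulVec_mulVec, hKx, htr,
    star_vec_dotProduct_vec]
  exact sub_nonneg.mpr (C.inv_natCast_smul_star_trace_mul_trace_le hrank)

end Matrix

/-- The Kronecker product is indexed by `Fin m × Fin n` (`(i, p)` stands for the 1-based index
`n(i−1)+p`), and `vec(P)` for `P : ℂ^{n×m}` is `(j, i) ↦ P i j`, i.e. `Matrix.vec P`. -/
theorem kronecker_loewner_lower_bound_general (m n β : ℕ)
    (A : Matrix (Fin m) (Fin β) ℂ) (B : Matrix (Fin n) (Fin β) ℂ) :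
    (((A * Aᴴ) ⊗ₖ (B * Bᴴ)) -
        (((min (A * Aᴴ).rank (B * Bᴴ).rank : ℕ) : ℂ))⁻¹ •
          vecMulVec (fun p : Fin m × Fin n => (B * Aᵀ) p.2 p.1)
            (star fun p : Fin m × Fin n => (B * Aᵀ) p.2 p.1)).PosSemidef ∧
    (vecMulVec (fun p : Fin m × Fin n => (B * Aᵀ) p.2 p.1)
        (star fun p : Fin m × Fin n => (B * Aᵀ) p.2 p.1)).PosSemidef := by
  rw [rank_self_mul_conjTranspose, rank_self_mul_conjTranspose]
  exact ⟨posSemidef_kronecker_sub_inv_rank_smul_vecMulVec_vec A B,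
    posSemidef_vecMulVec_self_star (vec (B * Aᵀ))⟩

/-- for nonzero `A : ℂ^{m×β}` and `B : ℂ^{n×β}`,
`AA* ⊗ BB* ≽ (1/min(rk AA*, rk BB*)) vec(BAᵀ) vec(BAᵀ)* ≽ 0`.
Here the Kronecker product is indexed by `Fin m × Fin n` (corresponding to the
1-based index `n(i−1)+p ↦ (i,p)`), and `vec(P)` for `P : ℂ^{n×m}` is the
function `(j, i) ↦ P i j` (the 1-based `vec(P)_{n(j−1)+i} = P_{ij}`). -/
theorem kronecker_loewner_lower_bound (m n β : ℕ) (hm : 1 ≤ m) (hn : 1 ≤ n) (hβ : 1 ≤ β)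
    (A : Matrix (Fin m) (Fin β) ℂ) (B : Matrix (Fin n) (Fin β) ℂ)
    (hA : A ≠ 0) (hB : B ≠ 0) :
    (((A * Aᴴ) ⊗ₖ (B * Bᴴ)) -
        (((min (A * Aᴴ).rank (B * Bᴴ).rank : ℕ) : ℂ))⁻¹ •
          vecMulVec (fun p : Fin m × Fin n => (B * Aᵀ) p.2 p.1)
            (star fun p : Fin m × Fin n => (B * Aᵀ) p.2 p.1)).PosSemidef ∧
    (vecMulVec (fun p : Fin m × Fin n => (B * Aᵀ) p.2 p.1)
        (star fun p : Fin m × Fin n => (B * Aᵀ) p.2 p.1)).PosSemidef :=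
  kronecker_loewner_lower_bound_general m n β A B
end

section
/- For all integers m, n, β ≥ 1 and every integer r with 1 ≤ r ≤ min(m, n, β), there exist matrices A ∈ ℂ^{m×β} and B ∈ ℂ^{n×β} with rk(AA*) = rk(BB*) = r and a vector u ∈ ℂ^{mn} such that u*(AA* ⊗ BB*)u = (1/r)·|vec(BA^T)* u|² and this common value is nonzero. In particular, the coefficient 1/min(rk AA*, rk BB*) in the lower bound AA* ⊗ BB* ≽ (1/min(rk AA*, rk BB*)) vec(BA^T) vec(BA^T)* cannot be replaced by any larger constant uniformly over all A, B. -/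
/-!
Let `E_k : ℂ^{k×r}` be the matrix of the embedding of the first `r` coordinates, so that
`E_kᴴ E_k = 1` and `E_k E_kᴴ` is a coordinate projection of rank `r`. Take `A = E_m E_βᴴ` and
`B = E_n E_βᴴ`. Then `AAᴴ = E_m E_mᴴ`, `BBᴴ = E_n E_nᴴ` and `X = BAᵀ = E_n E_mᴴ`, all with real
entries. Since `BBᴴ X (AAᴴ)ᵀ = X`, the vector `u = vec X` is fixed by `AAᴴ ⊗ BBᴴ`, so both sides
of the identity equal `‖u‖² = tr (E_m E_mᴴ) = r`.
-/

open Matrix Kronecker ComplexOrder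

namespace Function.Embedding

variable {R ι κ ν : Type*} [DecidableEq κ]

def toMatrix (R : Type*) [Zero R] [One R] (e : ι ↪ κ) : Matrix κ ι R :=
  (1 : Matrix κ κ R).submatrix id e

section Semiring

variable [Semiring R] [StarRing R] (e : ι ↪ κ)

theorem conjTranspose_toMatrix : (e.toMatrix R)ᴴ = (1 : Matrix κ κ R).submatrix e id := by
  rw [toMatrix, conjTranspose_submatrix, conjTranspose_one]

theorem map_star_toMatrix : (e.toMatrix R).map star = e.toMatrix R := by
  ext i j
  simp only [toMatrix, map_apply, submatrix_apply, one_apply, id_eq]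
  split_ifs <;> simp

theorem transpose_toMatrix : (e.toMatrix R)ᵀ = (e.toMatrix R)ᴴ := by
  rw [conjTranspose, transpose_map, map_star_toMatrix]

theorem transpose_conjTranspose_toMatrix : (e.toMatrix R)ᴴᵀ = e.toMatrix R := by
  rw [conjTranspose_transpose, map_star_toMatrix]

variable [Fintype κ] [DecidableEq ι]

theorem conjTranspose_toMatrix_mul_self : (e.toMatrix R)ᴴ * e.toMatrix R = 1 := by
  rw [conjTranspose_toMatrix, toMatrix, ← submatrix_mul _ _ _ _ _ bijective_id, mul_one,
    submatrix_one_embedding]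

theorem conjTranspose_toMatrix_mul_toMatrix_mul [Fintype ι] (W : Matrix ι ν R) :
    (e.toMatrix R)ᴴ * (e.toMatrix R * W) = W := by
  rw [← Matrix.mul_assoc, conjTranspose_toMatrix_mul_self, Matrix.one_mul]

end Semiring

theorem transpose_toMatrix_mul_conjTranspose [CommSemiring R] [StarRing R] [Fintype ι]
    [DecidableEq ν] (e : ι ↪ κ) (f : ι ↪ ν) :
    (e.toMatrix R * (f.toMatrix R)ᴴ)ᵀ = f.toMatrix R * (e.toMatrix R)ᴴ := by
  rw [transpose_mul, transpose_conjTranspose_toMatrix, transpose_toMatrix]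

variable [Fintype ι] [Fintype κ] [DecidableEq ι]

theorem trace_toMatrix_mul_conjTranspose [CommSemiring R] [StarRing R] (e : ι ↪ κ) :
    (e.toMatrix R * (e.toMatrix R)ᴴ).trace = Fintype.card ι := by
  rw [trace_mul_comm, conjTranspose_toMatrix_mul_self, trace_one]

theorem rank_toMatrix_mul_conjTranspose [Field R] [PartialOrder R] [StarRing R]
    [StarOrderedRing R] (e : ι ↪ κ) :
    (e.toMatrix R * (e.toMatrix R)ᴴ).rank = Fintype.card ι := by
  rw [rank_self_mul_conjTranspose, ← rank_conjTranspose_mul_self, conjTranspose_toMatrix_mul_self,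
    rank_one]

end Function.Embedding

open Function.Embedding

theorem kronecker_lower_bound_sharp_general (m n β r : ℕ)
    (hr : 1 ≤ r) (hrm : r ≤ min m (min n β)) :
    ∃ (A : Matrix (Fin m) (Fin β) ℂ) (B : Matrix (Fin n) (Fin β) ℂ)
      (u : Fin m × Fin n → ℂ),
      (A * Aᴴ).rank = r ∧ (B * Bᴴ).rank = r ∧
      star u ⬝ᵥ (((A * Aᴴ) ⊗ₖ (B * Bᴴ)).mulVec u)
        = ((r : ℂ))⁻¹ *
            ((‖(star fun p : Fin m × Fin n => (B * Aᵀ) p.2 p.1) ⬝ᵥ u‖ ^ 2 : ℝ) : ℂ) ∧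
      star u ⬝ᵥ (((A * Aᴴ) ⊗ₖ (B * Bᴴ)).mulVec u) ≠ 0 := by
  obtain ⟨hrm, hrn, hrβ⟩ : r ≤ m ∧ r ≤ n ∧ r ≤ β := by simpa only [le_min_iff] using hrm
  set Em := (Fin.castLEEmb hrm).toMatrix ℂ
  set En := (Fin.castLEEmb hrn).toMatrix ℂ
  set Eβ := (Fin.castLEEmb hrβ).toMatrix ℂ
  have hAA : Em * Eβᴴ * (Em * Eβᴴ)ᴴ = Em * Emᴴ := by
    simp only [conjTranspose_mul, conjTranspose_conjTranspose, Matrix.mul_assoc,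
      conjTranspose_toMatrix_mul_toMatrix_mul, Eβ]
  have hBB : En * Eβᴴ * (En * Eβᴴ)ᴴ = En * Enᴴ := by
    simp only [conjTranspose_mul, conjTranspose_conjTranspose, Matrix.mul_assoc,
      conjTranspose_toMatrix_mul_toMatrix_mul, Eβ]
  have hBA : En * Eβᴴ * (Em * Eβᴴ)ᵀ = En * Emᴴ := by
    simp only [transpose_toMatrix_mul_conjTranspose, Matrix.mul_assoc,
      conjTranspose_toMatrix_mul_toMatrix_mul, Em, Eβ]
  have hfix : En * Enᴴ * (En * Emᴴ) * (Em * Emᴴ)ᵀ = En * Emᴴ := by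
    simp only [transpose_toMatrix_mul_conjTranspose, Matrix.mul_assoc,
      conjTranspose_toMatrix_mul_toMatrix_mul, Em, En]
  have hnorm : star (vec (En * Emᴴ)) ⬝ᵥ vec (En * Emᴴ) = r := by
    simp only [star_vec_dotProduct_vec, conjTranspose_mul, conjTranspose_conjTranspose,
      Matrix.mul_assoc, conjTranspose_toMatrix_mul_toMatrix_mul, En]
    rw [trace_toMatrix_mul_conjTranspose, Fintype.card_fin]
  refine ⟨Em * Eβᴴ, En * Eβᴴ, vec (En * Emᴴ), ?_, ?_, ?_⟩
  · rw [hAA, rank_toMatrix_mul_conjTranspose, Fintype.card_fin]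
  · rw [hBB, rank_toMatrix_mul_conjTranspose, Fintype.card_fin]
  have hr0 : (r : ℂ) ≠ 0 := Nat.cast_ne_zero.mpr (by omega)
  rw [hAA, hBB, hBA, kronecker_mulVec_vec, hfix]
  change _ = _ * ((‖star (vec (En * Emᴴ)) ⬝ᵥ vec (En * Emᴴ)‖ ^ 2 : ℝ) : ℂ) ∧ _
  rw [hnorm, Complex.norm_natCast]
  refine ⟨?_, hr0⟩
  push_cast
  field_simp

/-- sharpness of the constant `1/min(rk AA*, rk BB*)` in the
Kronecker-product lower bound. -/
theorem kronecker_lower_bound_sharp (m n β r : ℕ) (hm : 1 ≤ m) (hn : 1 ≤ n) (hβ : 1 ≤ β)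
    (hr : 1 ≤ r) (hrm : r ≤ min m (min n β)) :
    ∃ (A : Matrix (Fin m) (Fin β) ℂ) (B : Matrix (Fin n) (Fin β) ℂ)
      (u : Fin m × Fin n → ℂ),
      (A * Aᴴ).rank = r ∧ (B * Bᴴ).rank = r ∧
      star u ⬝ᵥ (((A * Aᴴ) ⊗ₖ (B * Bᴴ)).mulVec u)
        = ((r : ℂ))⁻¹ *
            ((‖(star fun p : Fin m × Fin n => (B * Aᵀ) p.2 p.1) ⬝ᵥ u‖ ^ 2 : ℝ) : ℂ) ∧
      star u ⬝ᵥ (((A * Aᴴ) ⊗ₖ (B * Bᴴ)).mulVec u) ≠ 0 :=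
  kronecker_lower_bound_sharp_general m n β r hr hrm
end

section
/- For all integers N, β ≥ 1 and every integer r with 1 ≤ r ≤ min(N, β), there exist matrices A, B ∈ ℂ^{N×β} with rk(AA*) = rk(BB*) = r and a vector u ∈ ℂ^N such that u*(AA* ⋄ BB*)u = (1/r)·|ρ* u|² and this common value is nonzero, where ρ ∈ ℂ^N has entries ρ_k := Σ_{i=1}^{k} (BA^T)_{i, k−i+1}. In particular, the coefficient 1/min(rk AA*, rk BB*) in the lower bound AA* ⋄ BB* ≽ (1/min(rk AA*, rk BB*)) ρ ρ* cannot be replaced by any larger constant uniformly over all A, B. -/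
/-!
Take `A` with a single `1` in each of the rows `0, …, r-1` on the diagonal, and `B` with a
single `1` in each of those rows on the anti-diagonal `i + t = r - 1`. Then `AA* = BB*` is the
diagonal projection `D` onto the first `r` coordinates, `BAᵀ` is the anti-diagonal
`i + m = r - 1`, and with `u = e_{r-1}` both `u*(D ⋄ D)u` and `ρ_{r-1}` count the `r` pairs
`(k, r-1-k)`, so `u*(D ⋄ D)u = r = r⁻¹ · |ρ* u|²`.
-/

open Matrix ComplexOrder

namespace Matrix

section selectionMatrix

variable {ι κ R : Type*} {β : ℕ}

def selectionMatrix [Zero R] [One R] (p : ι → Prop) [DecidablePred p] (σ : ι → ℕ) :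
    Matrix ι (Fin β) R :=
  of fun i s => if p i ∧ σ i = s then 1 else 0

-- Without the type ascriptions `*` can elaborate through the `CStarMatrix` instance.
theorem selectionMatrix_mul_transpose [NonAssocSemiring R] (p : ι → Prop) [DecidablePred p]
    (q : κ → Prop) [DecidablePred q] (σ : ι → ℕ) (τ : κ → ℕ) (hσ : ∀ i, p i → σ i < β) :
    (selectionMatrix p σ : Matrix ι (Fin β) R) * (selectionMatrix q τ : Matrix κ (Fin β) R)ᵀ =
      of fun i j => if p i ∧ q j ∧ σ i = τ j then (1 : R) else 0 := by
  ext i j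
  simp only [selectionMatrix, mul_apply, transpose_apply, of_apply, ite_mul, one_mul, zero_mul]
  by_cases hi : p i
  · rw [Finset.sum_eq_single ⟨σ i, hσ i hi⟩] <;> grind
  · simp [hi]

theorem conjTranspose_selectionMatrix [Semiring R] [StarRing R] (p : ι → Prop) [DecidablePred p]
    (σ : ι → ℕ) :
    (selectionMatrix p σ : Matrix ι (Fin β) R)ᴴ = (selectionMatrix p σ)ᵀ := by
  ext s i
  simp only [selectionMatrix, conjTranspose_apply, transpose_apply, of_apply]
  split_ifs <;> simp

theorem selectionMatrix_mul_conjTranspose_self [DecidableEq ι] [Semiring R] [StarRing R]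
    (p : ι → Prop) [DecidablePred p] (σ : ι → ℕ) (hσ : ∀ i, p i → σ i < β)
    (hinj : ∀ i j, p i → p j → σ i = σ j → i = j) :
    (selectionMatrix p σ : Matrix ι (Fin β) R) * (selectionMatrix p σ : Matrix ι (Fin β) R)ᴴ =
      diagonal fun i => if p i then (1 : R) else 0 := by
  rw [conjTranspose_selectionMatrix, selectionMatrix_mul_transpose (R := R) p p σ σ hσ]
  ext i j
  simp only [of_apply, diagonal_apply]
  grind

end selectionMatrix

theorem rank_diagonal_indicator {ι R : Type*} [Fintype ι] [DecidableEq ι] [Field R]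
    [DecidableEq R] (p : ι → Prop) [DecidablePred p] :
    (diagonal fun i => if p i then (1 : R) else 0).rank = Fintype.card {i // p i} := by
  rw [rank_diagonal]
  exact Fintype.card_congr (Equiv.subtypeEquivRight fun i => by split_ifs <;> simp [*])

theorem star_single_dotProduct_mulVec_single {ι R : Type*} [Fintype ι] [DecidableEq ι]
    [NonAssocSemiring R] [StarRing R] (M : Matrix ι ι R) (i : ι) :
    star (Pi.single i 1 : ι → R) ⬝ᵥ M *ᵥ Pi.single i 1 = M i i := by
  rw [← Pi.single_star, star_one, mulVec_single_one, single_dotProduct, one_mul, col_apply]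

end Matrix

theorem matConv_diagonal_apply_self {N : ℕ} (d e : Fin N → ℂ) (i : Fin N) :
    matConv (diagonal d) (diagonal e) i i =
      ∑ k : Fin N, if k ≤ i then d k * e (i - k) else 0 := by
  rw [matConv, of_apply]
  refine Finset.sum_congr rfl fun k _ => ?_
  rw [Finset.sum_eq_single k]
  · simp only [diagonal_apply_eq, Fin.le_def, and_self]
  · intro l _ hlk
    simp only [diagonal_apply_ne d hlk.symm, zero_mul, ite_self]
  · simp

theorem Fin.sum_boole_le {R : Type*} [AddCommMonoidWithOne R] {N : ℕ} (i : Fin N) :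
    ∑ k : Fin N, (if k ≤ i then (1 : R) else 0) = ((i.1 + 1 : ℕ) : R) := by
  rw [Finset.sum_boole, ← Fin.card_Iic]
  congr 3
  ext
  simp

/-- `antidiagSum M k = ∑_{i + j = k} M i j`, so the paper's `ρ` is `antidiagSum (B * Aᵀ)`. -/
def antidiagSum {N : ℕ} (M : Matrix (Fin N) (Fin N) ℂ) (k : Fin N) : ℂ :=
  ∑ i : Fin N, if i.1 ≤ k.1 then M i (k - i) else 0

section extremal

variable (N β r : ℕ)

def leadingProjection : Matrix (Fin N) (Fin N) ℂ :=
  diagonal fun i => if i.1 < r then 1 else 0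

def diagSelection : Matrix (Fin N) (Fin β) ℂ :=
  selectionMatrix (fun i : Fin N => i.1 < r) fun i => i.1

def antidiagSelection : Matrix (Fin N) (Fin β) ℂ :=
  selectionMatrix (fun i : Fin N => i.1 < r) fun i => r - 1 - i.1

variable {N β r}

theorem rank_leadingProjection (h : r ≤ N) : (leadingProjection N r).rank = r := by
  rw [leadingProjection, rank_diagonal_indicator, Fintype.card_subtype, Fin.card_filter_val_lt,
    min_eq_right h]

theorem diagSelection_mul_conjTranspose_self (h : r ≤ β) :
    diagSelection N β r * (diagSelection N β r)ᴴ = leadingProjection N r :=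
  selectionMatrix_mul_conjTranspose_self _ _ (fun _ hi => hi.trans_le h) fun _ _ _ _ => Fin.ext

theorem antidiagSelection_mul_conjTranspose_self (h : r ≤ β) :
    antidiagSelection N β r * (antidiagSelection N β r)ᴴ = leadingProjection N r :=
  selectionMatrix_mul_conjTranspose_self _ _ (fun _ _ => by omega)
    fun _ _ _ _ _ => Fin.ext (by omega)

theorem matConv_leadingProjection_apply_self (i : Fin N) (hi : i.1 + 1 = r) :
    matConv (leadingProjection N r) (leadingProjection N r) i i = r := by
  subst hi
  rw [leadingProjection, matConv_diagonal_apply_self, ← Fin.sum_boole_le i]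
  refine Finset.sum_congr rfl fun k _ => ?_
  have := @Fin.sub_val_of_le _ i k
  split_ifs <;> grind [Fin.le_def]

theorem antidiagSum_antidiagSelection_mul_transpose (h : r ≤ β) (i : Fin N) (hi : i.1 + 1 = r) :
    antidiagSum (antidiagSelection N β r * (diagSelection N β r)ᵀ) i = r := by
  subst hi
  rw [antidiagSelection, diagSelection, selectionMatrix_mul_transpose _ _ _ _ fun _ _ => by omega,
    antidiagSum, ← Fin.sum_boole_le i]
  refine Finset.sum_congr rfl fun k _ => ?_
  have := @Fin.sub_val_of_le _ i k
  simp only [of_apply]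
  split_ifs <;> grind [Fin.le_def]

end extremal

theorem matConv_lower_bound_sharp_general (N β r : ℕ)
    (hr : 1 ≤ r) (hrm : r ≤ min N β) :
    ∃ (A B : Matrix (Fin N) (Fin β) ℂ) (u : Fin N → ℂ),
      (A * Aᴴ).rank = r ∧ (B * Bᴴ).rank = r ∧
      star u ⬝ᵥ (matConv (A * Aᴴ) (B * Bᴴ)).mulVec u
        = ((r : ℂ))⁻¹ *
            ((‖(star fun k : Fin N =>
                  ∑ i : Fin N, if i.1 ≤ k.1 then (B * Aᵀ) i (k - i) else 0) ⬝ᵥ u‖ ^ 2 : ℝ) : ℂ) ∧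
      star u ⬝ᵥ (matConv (A * Aᴴ) (B * Bᴴ)).mulVec u ≠ 0 := by
  obtain ⟨hrN, hrβ⟩ := le_min_iff.mp hrm
  let i : Fin N := ⟨r - 1, by omega⟩
  have hi : i.1 + 1 = r := Nat.sub_add_cancel hr
  have hr0 : (r : ℂ) ≠ 0 := by exact_mod_cast (by omega : r ≠ 0)
  have hquad : star (Pi.single i 1) ⬝ᵥ (matConv (diagSelection N β r * (diagSelection N β r)ᴴ)
      (antidiagSelection N β r * (antidiagSelection N β r)ᴴ)) *ᵥ Pi.single i 1 = r := by
    rw [diagSelection_mul_conjTranspose_self hrβ, antidiagSelection_mul_conjTranspose_self hrβ,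
      star_single_dotProduct_mulVec_single, matConv_leadingProjection_apply_self i hi]
  refine ⟨diagSelection N β r, antidiagSelection N β r, Pi.single i 1, ?_, ?_, ?_, hquad ▸ hr0⟩
  · rw [diagSelection_mul_conjTranspose_self hrβ, rank_leadingProjection hrN]
  · rw [antidiagSelection_mul_conjTranspose_self hrβ, rank_leadingProjection hrN]
  · change _ = _ * ((‖star (antidiagSum _) ⬝ᵥ _‖ ^ 2 : ℝ) : ℂ)
    rw [hquad, dotProduct_single, mul_one, Pi.star_apply,
      antidiagSum_antidiagSelection_mul_transpose hrβ i hi, star_natCast, Complex.norm_natCast]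
    push_cast
    field_simp

/-- sharpness of the constant `1/min(rk AA*, rk BB*)` in the
matrix-convolution lower bound. -/
theorem matConv_lower_bound_sharp (N β r : ℕ) (hN : 1 ≤ N) (hβ : 1 ≤ β)
    (hr : 1 ≤ r) (hrm : r ≤ min N β) :
    ∃ (A B : Matrix (Fin N) (Fin β) ℂ) (u : Fin N → ℂ),
      (A * Aᴴ).rank = r ∧ (B * Bᴴ).rank = r ∧
      star u ⬝ᵥ (matConv (A * Aᴴ) (B * Bᴴ)).mulVec u
        = ((r : ℂ))⁻¹ *
            ((‖(star fun k : Fin N =>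
                  ∑ i : Fin N, if i.1 ≤ k.1 then (B * Aᵀ) i (k - i) else 0) ⬝ᵥ u‖ ^ 2 : ℝ) : ℂ) ∧
      star u ⬝ᵥ (matConv (A * Aᴴ) (B * Bᴴ)).mulVec u ≠ 0 :=
  matConv_lower_bound_sharp_general N β r hr hrm
end

section
/- Fix an integer N ≥ 1 and let e_1, …, e_N denote the standard basis of ℂ^N. For 1 ≤ i, j ≤ N define Y_{ij} := [Σ_{k=1}^{i} e_k ⊗ e_{i−k+1}] [Σ_{l=1}^{j} e_l ⊗ e_{j−l+1}]^T ∈ ℂ^{N²×N²}, where ⊗ is the Kronecker product of column vectors. Then the block matrix Y = (Y_{ij})_{i,j=1}^{N} ∈ ℂ^{N³×N³} is positive semidefinite of rank one, and for all A, B ∈ ℂ^{N×N} and all 1 ≤ i, j ≤ N one has tr((A ⊗ B) Y_{ij}*) = (A ⋄ B)_{ij}; that is, the bilinear product parametrized by Y is the matrix convolution. -/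
open Matrix Kronecker ComplexOrder

/-- Standard basis vector `e_i` of `ℂ^N`. -/
noncomputable def stdVec (N : ℕ) (i : Fin N) : Fin N → ℂ := fun p => if p = i then 1 else 0

/-- The vector `Σ_{k ≤ i} e_k ⊗ e_{i-k}` (1-based: `Σ_{k=1}^i e_k ⊗ e_{i−k+1}`). -/
noncomputable def convVec (N : ℕ) (i : Fin N) : Fin N × Fin N → ℂ :=
  fun a => ∑ k : Fin N, if k.1 ≤ i.1 then stdVec N k a.1 * stdVec N (i - k) a.2 else 0

/-- The block matrix `Y = (Y_{ij})` with
`Y_{ij} = [Σ_{k≤i} e_k ⊗ e_{i-k}][Σ_{l≤j} e_l ⊗ e_{j-l}]ᵀ`. -/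
noncomputable def convY (N : ℕ) :
    Matrix (Fin N × (Fin N × Fin N)) (Fin N × (Fin N × Fin N)) ℂ :=
  Matrix.of fun p q => convVec N p.1 p.2 * convVec N q.1 q.2

/-!
Each `u_i = Σ_{k ≤ i} e_k ⊗ e_{i-k}` is a real 0/1 vector, so `Y` is the outer product `v vᵀ = v v*`
of the stacked vector `v = (u_1, …, u_N) ≠ 0`; hence `Y` is positive semidefinite of rank one.
Moreover `tr(M (u_i u_jᵀ)*) = u_iᵀ M u_j`, and pairing with `u_i` picks out exactly the coordinates
`(k, i - k)` with `k ≤ i`, which turns `u_iᵀ (A ⊗ B) u_j` into `Σ_{k ≤ i, l ≤ j} a_{kl} b_{i-k, j-l}`.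
-/

theorem Matrix.rank_pos_of_ne_zero {m n K : Type*} [Fintype n] [Field K] {M : Matrix m n K}
    (hM : M ≠ 0) : 0 < M.rank := by
  classical
  rw [Nat.pos_iff_ne_zero, Matrix.rank, Ne, Submodule.finrank_eq_zero, LinearMap.range_eq_bot,
    ← Matrix.toLin'_apply', LinearEquiv.map_eq_zero_iff]
  exact hM

theorem Matrix.rank_vecMulVec_of_ne_zero {m n K : Type*} [Fintype n] [Field K] {w : m → K}
    {v : n → K} (hw : w ≠ 0) (hv : v ≠ 0) : (vecMulVec w v).rank = 1 := by
  refine le_antisymm (rank_vecMulVec_le w v) (rank_pos_of_ne_zero ?_)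
  obtain ⟨a, ha⟩ := Function.ne_iff.mp hw
  obtain ⟨b, hb⟩ := Function.ne_iff.mp hv
  exact fun h => mul_ne_zero ha hb (congrFun₂ h a b)

theorem convVec_apply (N : ℕ) (i : Fin N) (a : Fin N × Fin N) :
    convVec N i a = if a.1 ≤ i ∧ a.2 = i - a.1 then 1 else 0 := by
  rw [convVec, Finset.sum_eq_single a.1]
  · simp [stdVec, ite_and]
  · intro k _ hk
    simp [stdVec, Ne.symm hk]
  · simp

theorem star_convVec (N : ℕ) (i : Fin N) : star (convVec N i) = convVec N i := by
  ext a
  simp [convVec_apply, apply_ite (star : ℂ → ℂ)]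

theorem dotProduct_convVec (N : ℕ) (i : Fin N) (f : Fin N × Fin N → ℂ) :
    f ⬝ᵥ convVec N i = ∑ k : Fin N, if (k : ℕ) ≤ i then f (k, i - k) else 0 := by
  simp [dotProduct, convVec_apply, Fintype.sum_prod_type, ite_and]

noncomputable def convStack (N : ℕ) : Fin N × (Fin N × Fin N) → ℂ := fun p => convVec N p.1 p.2

theorem star_convStack (N : ℕ) : star (convStack N) = convStack N := by
  ext p
  exact congrFun (star_convVec N p.1) p.2

theorem convStack_ne_zero {N : ℕ} (hN : 1 ≤ N) : convStack N ≠ 0 := by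
  have h0 : (⟨0, hN⟩ : Fin N) - ⟨0, hN⟩ = ⟨0, hN⟩ := by simp [Fin.sub_def]
  refine Function.ne_iff.mpr ⟨(⟨0, hN⟩, ⟨0, hN⟩, ⟨0, hN⟩), ?_⟩
  simp [convStack, convVec_apply, h0]

theorem convY_eq_vecMulVec (N : ℕ) : convY N = vecMulVec (convStack N) (convStack N) := rfl

theorem trace_kronecker_mul_vecMulVec_convVec {N : ℕ} (A B : Matrix (Fin N) (Fin N) ℂ)
    (i j : Fin N) : trace ((A ⊗ₖ B) * vecMulVec (convVec N j) (convVec N i)) = matConv A B i j := by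
  rw [mul_vecMulVec, trace_vecMulVec, dotProduct_convVec, matConv, of_apply]
  simp only [mulVec, dotProduct_convVec, kroneckerMap_apply, ite_and, Finset.sum_ite_irrel,
    Finset.sum_const_zero]

/-- `Y` is positive semidefinite of rank one and
`tr((A ⊗ B) Y_{ij}*) = (A ⋄ B)_{ij}`, i.e. the bilinear product parametrized by
`Y` is the matrix convolution. -/
theorem matConv_parametrization (N : ℕ) (hN : 1 ≤ N) :
    (convY N).PosSemidef ∧ (convY N).rank = 1 ∧
      ∀ (A B : Matrix (Fin N) (Fin N) ℂ) (i j : Fin N),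
        Matrix.trace ((A ⊗ₖ B) * (vecMulVec (convVec N i) (convVec N j))ᴴ)
          = matConv A B i j := by
  refine ⟨?_, ?_, fun A B i j => ?_⟩
  · rw [convY_eq_vecMulVec]
    nth_rw 2 [← star_convStack]
    exact posSemidef_vecMulVec_self_star _
  · exact rank_vecMulVec_of_ne_zero (convStack_ne_zero hN) (convStack_ne_zero hN)
  · rw [conjTranspose_vecMulVec, star_convVec, star_convVec]
    exact trace_kronecker_mul_vecMulVec_convVec A B i j
end

section
/- Fix integers m, n, N, β ≥ 1. Let v_1, …, v_N ∈ ℂ^{mn}, not all zero, and set C_i := vec^{−1}(v_i) ∈ ℂ^{n×m} and Y_{ij} := v_i v_j* for 1 ≤ i, j ≤ N, with induced product (A⋆B)_{ij} := tr((A⊗B) Y_{ij}*). Let 𝐫 := max{ rk X : X ∈ span_ℂ{C_1, …, C_N} }. Then for all nonzero A ∈ ℂ^{m×β} and B ∈ ℂ^{n×β}, one has AA* ⋆ BB* ≽ (1/min(rk AA*, rk BB*, 𝐫)) · ρ ρ* ≽ 0, where ρ ∈ ℂ^N is the vector with entries ρ_i := v_i* vec(BA^T). -/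
/-!
For `x ∈ ℂᴺ` put `X = ∑ xᵢ Cᵢ ∈ span {Cᵢ}` and `F = Bᴴ X Ā`. Since `(A ⊗ B)ᴴ vec X = vec F`, the
quadratic form of `AA* ⋆ BB*` at `x` is `‖F‖²` (Frobenius), while `ρ* x = tr F`. So the claim is
`|tr F|² ≤ c ‖F‖²` with `c = min (rk A, rk B, 𝐫) ≥ rk F`. In an eigenbasis of `F Fᴴ`, only `rk F`
rows of `F` are nonzero, and Cauchy–Schwarz on the corresponding diagonal entries gives
`|tr F|² ≤ rk F · ‖F‖²`.
-/

open Matrix Kronecker ComplexOrder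

namespace Matrix

section RCLike

variable {𝕜 : Type*} [RCLike 𝕜] {n : Type*} [Fintype n]

theorem star_dotProduct_self_eq_sum_norm_sq (y : n → 𝕜) :
    star y ⬝ᵥ y = ((∑ i, ‖y i‖ ^ 2 : ℝ) : 𝕜) := by
  simp [dotProduct, RCLike.star_def, RCLike.conj_mul]

theorem sum_norm_sq_vec {m : Type*} [Fintype m] (A : Matrix m n 𝕜) :
    ∑ k, ‖vec A k‖ ^ 2 = ∑ i, ∑ j, ‖A i j‖ ^ 2 := by
  rw [Fintype.sum_prod_type, Finset.sum_comm]
  rfl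

theorem trace_conjTranspose_mul_self_eq_sum_norm_sq {m : Type*} [Fintype m] (A : Matrix m n 𝕜) :
    (Aᴴ * A).trace = ((∑ i, ∑ j, ‖A i j‖ ^ 2 : ℝ) : 𝕜) := by
  rw [← star_vec_dotProduct_vec, star_dotProduct_self_eq_sum_norm_sq, sum_norm_sq_vec]

theorem norm_trace_sq_le_card_mul_sum_norm_sq (T : Matrix n n 𝕜) (s : Finset n)
    (hs : ∀ i ∉ s, T i = 0) :
    ‖T.trace‖ ^ 2 ≤ s.card * ∑ i, ∑ j, ‖T i j‖ ^ 2 := by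
  have htrace : T.trace = ∑ i ∈ s, T i i :=
    (Finset.sum_subset (Finset.subset_univ s) fun i _ hi => by simp [hs i hi]).symm
  calc ‖T.trace‖ ^ 2 ≤ (∑ i ∈ s, ‖T i i‖) ^ 2 := by
        rw [htrace]; gcongr; exact norm_sum_le _ _
    _ ≤ s.card * ∑ i ∈ s, ‖T i i‖ ^ 2 := sq_sum_le_card_mul_sum_sq
    _ ≤ s.card * ∑ i, ∑ j, ‖T i j‖ ^ 2 := by
        gcongr
        calc ∑ i ∈ s, ‖T i i‖ ^ 2 ≤ ∑ i, ‖T i i‖ ^ 2 :=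
              Finset.sum_le_sum_of_subset_of_nonneg (Finset.subset_univ s) fun _ _ _ =>
                by positivity
          _ ≤ ∑ i, ∑ j, ‖T i j‖ ^ 2 := Finset.sum_le_sum fun i _ =>
              Finset.single_le_sum (f := fun j => ‖T i j‖ ^ 2) (fun _ _ => by positivity)
                (Finset.mem_univ i)

variable [DecidableEq n]

theorem sum_norm_sq_unitary_conj (F : Matrix n n 𝕜) {U : Matrix n n 𝕜}
    (hU : U ∈ unitaryGroup n 𝕜) :
    ∑ i, ∑ j, ‖(star U * F * U) i j‖ ^ 2 = ∑ i, ∑ j, ‖F i j‖ ^ 2 := by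
  have h : ((star U * F * U)ᴴ * (star U * F * U)).trace = (Fᴴ * F).trace := by
    have hUU : U * Uᴴ = 1 := mem_unitaryGroup_iff.mp hU
    have hUU' : Uᴴ * U = 1 := mem_unitaryGroup_iff'.mp hU
    simp only [conjTranspose_mul, star_eq_conjTranspose, conjTranspose_conjTranspose, ← mul_assoc]
    rw [mul_assoc _ U, hUU, mul_one, trace_mul_cycle, ← mul_assoc U, hUU, one_mul]
  rwa [trace_conjTranspose_mul_self_eq_sum_norm_sq, trace_conjTranspose_mul_self_eq_sum_norm_sq,
    RCLike.ofReal_inj] at h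

theorem trace_unitary_conj (F : Matrix n n 𝕜) {U : Matrix n n 𝕜} (hU : U ∈ unitaryGroup n 𝕜) :
    (star U * F * U).trace = F.trace := by
  rw [trace_mul_cycle, mem_unitaryGroup_iff.mp hU, one_mul]

theorem exists_unitary_conj_rows_eq_zero (F : Matrix n n 𝕜) :
    ∃ U ∈ unitaryGroup n 𝕜, ∃ s : Finset n, s.card = F.rank ∧ ∀ i ∉ s, (star U * F * U) i = 0 := by
  classical
  have hH := isHermitian_mul_conjTranspose_self F
  set U : Matrix n n 𝕜 := (hH.eigenvectorUnitary : Matrix n n 𝕜)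
  refine ⟨U, hH.eigenvectorUnitary.2, Finset.univ.filter fun i => hH.eigenvalues i ≠ 0, ?_, ?_⟩
  · rw [← rank_self_mul_conjTranspose, hH.rank_eq_card_non_zero_eigs, Fintype.card_subtype]
  · intro i hi
    have hdiag : (star U * F) * (star U * F)ᴴ = diagonal (RCLike.ofReal ∘ hH.eigenvalues) := by
      rw [← hH.conjStarAlgAut_star_eigenvectorUnitary, Unitary.conjStarAlgAut_star_apply,
        conjTranspose_mul, ← star_eq_conjTranspose (star U), star_star]
      simp only [U, mul_assoc]
    have hrow : (star U * F) i = 0 := by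
      have h : ((star U * F) * (star U * F)ᴴ) i i = 0 := by
        rw [hdiag, diagonal_apply_eq]
        simpa using hi
      exact dotProduct_self_star_eq_zero.mp h
    ext j
    rw [mul_apply]
    exact Finset.sum_eq_zero fun k _ => by rw [congrFun hrow k, Pi.zero_apply, zero_mul]

theorem norm_trace_sq_le_rank_mul_sum_norm_sq (F : Matrix n n 𝕜) :
    ‖F.trace‖ ^ 2 ≤ F.rank * ∑ i, ∑ j, ‖F i j‖ ^ 2 := by
  obtain ⟨U, hU, s, hs, hrows⟩ := exists_unitary_conj_rows_eq_zero F
  have h := norm_trace_sq_le_card_mul_sum_norm_sq _ s hrows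
  rwa [trace_unitary_conj F hU, sum_norm_sq_unitary_conj F hU, hs] at h

end RCLike

theorem posSemidef_conjTranspose_mul_self_sub_inv_smul_vecMulVec {ι κ : Type*} [Fintype ι]
    [Fintype κ] (G : Matrix κ ι ℂ) (e : κ → ℂ) {c : ℝ}
    (h : ∀ x, ‖star e ⬝ᵥ (G *ᵥ x)‖ ^ 2 ≤ c * ∑ k, ‖(G *ᵥ x) k‖ ^ 2) :
    (Gᴴ * G - (c : ℂ)⁻¹ • vecMulVec (Gᴴ *ᵥ e) (star (Gᴴ *ᵥ e))).PosSemidef := by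
  set ρ := Gᴴ *ᵥ e
  have hρ : ∀ x, star ρ ⬝ᵥ x = star e ⬝ᵥ (G *ᵥ x) := fun x => by
    rw [dotProduct_mulVec, ← conjTranspose_conjTranspose G, ← star_mulVec]
  have hGram : ∀ x, star x ⬝ᵥ ((Gᴴ * G) *ᵥ x) = star (G *ᵥ x) ⬝ᵥ (G *ᵥ x) := fun x => by
    rw [← mulVec_mulVec, dotProduct_mulVec, ← star_mulVec]
  have hquad : ∀ x, star x ⬝ᵥ (vecMulVec ρ (star ρ) *ᵥ x) = ‖star e ⬝ᵥ (G *ᵥ x)‖ ^ 2 := fun x => by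
    rw [vecMulVec_mulVec, dotProduct_smul, op_smul_eq_mul, star_dotProduct x, hρ,
      ← Complex.conj_mul']
    rfl
  refine .of_dotProduct_mulVec_nonneg ?_ fun x => ?_
  · rw [← Complex.ofReal_inv]
    exact (isHermitian_conjTranspose_mul_self G).sub
      ((posSemidef_vecMulVec_self_star ρ).isHermitian.smul (Complex.conj_ofReal _))
  · rw [sub_mulVec, dotProduct_sub, smul_mulVec, dotProduct_smul, hGram, hquad,
      star_dotProduct_self_eq_sum_norm_sq, smul_eq_mul, sub_nonneg]
    suffices h' : c⁻¹ * ‖star e ⬝ᵥ (G *ᵥ x)‖ ^ 2 ≤ ∑ k, ‖(G *ᵥ x) k‖ ^ 2 by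
      simpa using Complex.real_le_real.2 h'
    rcases le_or_gt c 0 with hc | hc
    · exact (mul_nonpos_of_nonpos_of_nonneg (inv_nonpos.2 hc) (by positivity)).trans
        (by positivity)
    · exact (inv_mul_le_iff₀ hc).2 (h x)

theorem trace_mul_conjTranspose_vecMulVec {α R : Type*} [Fintype α] [CommSemiring R] [StarRing R]
    (K : Matrix α α R) (a b : α → R) :
    (K * (vecMulVec a (star b))ᴴ).trace = star a ⬝ᵥ (K *ᵥ b) := by
  rw [conjTranspose_vecMulVec, star_star, mul_vecMulVec, trace_vecMulVec, dotProduct_comm]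

theorem rank_mul_mul_le {l m n o R : Type*} [Fintype m] [Fintype n] [Fintype o] [CommRing R]
    [StrongRankCondition R] (P : Matrix l m R) (X : Matrix m n R) (Q : Matrix n o R) :
    (P * X * Q).rank ≤ min P.rank (min X.rank Q.rank) :=
  le_min ((rank_mul_le_left _ _).trans (rank_mul_le_left _ _))
    (le_min ((rank_mul_le_left _ _).trans (rank_mul_le_right _ _)) (rank_mul_le_right _ _))

theorem posSemidef_trace_kronecker_sub_inv_smul_vecMulVec {m n β ι : Type*} [Fintype m]
    [Fintype n] [Fintype β] [DecidableEq β] [Fintype ι]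
    (A : Matrix m β ℂ) (B : Matrix n β ℂ) (C : ι → Matrix n m ℂ) {c : ℕ}
    (hc : ∀ X ∈ Submodule.span ℂ (Set.range C), (Bᴴ * X * (Aᴴ)ᵀ).rank ≤ c) :
    ((of fun i j => (((A * Aᴴ) ⊗ₖ (B * Bᴴ)) * (vecMulVec (vec (C i)) (star (vec (C j))))ᴴ).trace) -
      (c : ℂ)⁻¹ • vecMulVec (fun i => star (vec (C i)) ⬝ᵥ vec (B * Aᵀ))
        (star fun i => star (vec (C i)) ⬝ᵥ vec (B * Aᵀ))).PosSemidef := by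
  set V : Matrix (m × n) ι ℂ := (of fun i => vec (C i))ᵀ
  have hM : (of fun i j => (((A * Aᴴ) ⊗ₖ (B * Bᴴ)) *
      (vecMulVec (vec (C i)) (star (vec (C j))))ᴴ).trace) =
      ((A ⊗ₖ B)ᴴ * V)ᴴ * ((A ⊗ₖ B)ᴴ * V) := by
    rw [conjTranspose_mul, conjTranspose_conjTranspose, ← Matrix.mul_assoc, Matrix.mul_assoc Vᴴ,
      conjTranspose_kronecker, ← mul_kronecker_mul, Matrix.mul_assoc]
    ext i j
    rw [of_apply, trace_mul_conjTranspose_vecMulVec]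
    rfl
  have hρ : (fun i => star (vec (C i)) ⬝ᵥ vec (B * Aᵀ)) =
      ((A ⊗ₖ B)ᴴ * V)ᴴ *ᵥ vec (1 : Matrix β β ℂ) := by
    rw [conjTranspose_mul, conjTranspose_conjTranspose, ← mulVec_mulVec, kronecker_mulVec_vec,
      Matrix.mul_one]
    rfl
  have hGx : ∀ x, ((A ⊗ₖ B)ᴴ * V) *ᵥ x = vec (Bᴴ * (∑ i, x i • C i) * (Aᴴ)ᵀ) := fun x => by
    rw [← mulVec_mulVec, mulVec_transpose, vecMul_eq_sum, conjTranspose_kronecker,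
      ← kronecker_mulVec_vec, vec_sum]
    simp_rw [vec_smul]
    rfl
  rw [hM, hρ, ← Complex.ofReal_natCast]
  refine posSemidef_conjTranspose_mul_self_sub_inv_smul_vecMulVec _ _ fun x => ?_
  have hX : ∑ i, x i • C i ∈ Submodule.span ℂ (Set.range C) :=
    (Submodule.mem_span_range_iff_exists_fun ℂ).2 ⟨x, rfl⟩
  rw [hGx, star_vec_dotProduct_vec, conjTranspose_one, Matrix.one_mul, sum_norm_sq_vec]
  calc _ ≤ _ := norm_trace_sq_le_rank_mul_sum_norm_sq _
    _ ≤ _ := by gcongr; exact_mod_cast hc _ hX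

end Matrix

theorem rank_one_prod_lower_bound_general (m n N β : ℕ)
    (v : Fin N → Fin m × Fin n → ℂ)
    (C : Fin N → Matrix (Fin n) (Fin m) ℂ) (hC : ∀ i p q, C i p q = v i (q, p))
    (rstar : ℕ)
    (hrstar : rstar =
      sSup {t : ℕ | ∃ X ∈ Submodule.span ℂ (Set.range C), Matrix.rank X = t})
    (A : Matrix (Fin m) (Fin β) ℂ) (B : Matrix (Fin n) (Fin β) ℂ) :
    ((Matrix.of fun i j : Fin N =>
        Matrix.trace (((A * Aᴴ) ⊗ₖ (B * Bᴴ)) * (vecMulVec (v i) (star (v j)))ᴴ)) -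
      (((min (min (A * Aᴴ).rank (B * Bᴴ).rank) rstar : ℕ) : ℂ))⁻¹ •
        vecMulVec
          (fun i : Fin N => star (v i) ⬝ᵥ (fun p : Fin m × Fin n => (B * Aᵀ) p.2 p.1))
          (star fun i : Fin N =>
            star (v i) ⬝ᵥ (fun p : Fin m × Fin n => (B * Aᵀ) p.2 p.1))).PosSemidef ∧
    (vecMulVec
        (fun i : Fin N => star (v i) ⬝ᵥ (fun p : Fin m × Fin n => (B * Aᵀ) p.2 p.1))
        (star fun i : Fin N =>
          star (v i) ⬝ᵥ (fun p : Fin m × Fin n => (B * Aᵀ) p.2 p.1))).PosSemidef := by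
  -- `hC` says `v i = vec (C i)`, and `fun p => (B * Aᵀ) p.2 p.1` is `vec (B * Aᵀ)`.
  obtain rfl : v = fun i => vec (C i) := funext fun i => funext fun ⟨q, p⟩ => (hC i p q).symm
  have hbdd : BddAbove {t : ℕ | ∃ X ∈ Submodule.span ℂ (Set.range C), X.rank = t} :=
    ⟨n, by rintro _ ⟨X, -, rfl⟩; simpa using X.rank_le_card_height⟩
  refine ⟨posSemidef_trace_kronecker_sub_inv_smul_vecMulVec A B C fun X hX => ?_,
    posSemidef_vecMulVec_self_star _⟩
  have hF := rank_mul_mul_le Bᴴ X (Aᴴ)ᵀ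
  have hXr : X.rank ≤ rstar := hrstar ▸ le_csSup hbdd ⟨X, hX, rfl⟩
  rw [rank_conjTranspose, rank_transpose, rank_conjTranspose] at hF
  rw [rank_self_mul_conjTranspose, rank_self_mul_conjTranspose]
  omega

/-- lower bound for a rank-one product `⋆` given by `Y_{ij} = v_i v_j*`:
for nonzero `A, B`, `AA* ⋆ BB* ≽ (1/min(rk AA*, rk BB*, 𝐫)) ρρ* ≽ 0` where
`ρ_i = v_i* vec(BAᵀ)`, `C_i = vec⁻¹(v_i)` and
`𝐫 = max{rk X : X ∈ span{C_1,…,C_N}}`.  Here indices `Fin m × Fin n` encode the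
1-based `n(i−1)+p`, `vec(P) (j,i) = P i j`, and `(A ⋆ B)_{ij} = tr((A⊗B) Y_{ij}*)`. -/
theorem rank_one_prod_lower_bound (m n N β : ℕ)
    (hm : 1 ≤ m) (hn : 1 ≤ n) (hN : 1 ≤ N) (hβ : 1 ≤ β)
    (v : Fin N → Fin m × Fin n → ℂ) (hv : v ≠ 0)
    (C : Fin N → Matrix (Fin n) (Fin m) ℂ) (hC : ∀ i p q, C i p q = v i (q, p))
    (rstar : ℕ)
    (hrstar : rstar =
      sSup {t : ℕ | ∃ X ∈ Submodule.span ℂ (Set.range C), Matrix.rank X = t})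
    (A : Matrix (Fin m) (Fin β) ℂ) (B : Matrix (Fin n) (Fin β) ℂ)
    (hA : A ≠ 0) (hB : B ≠ 0) :
    ((Matrix.of fun i j : Fin N =>
        Matrix.trace (((A * Aᴴ) ⊗ₖ (B * Bᴴ)) * (vecMulVec (v i) (star (v j)))ᴴ)) -
      (((min (min (A * Aᴴ).rank (B * Bᴴ).rank) rstar : ℕ) : ℂ))⁻¹ •
        vecMulVec
          (fun i : Fin N => star (v i) ⬝ᵥ (fun p : Fin m × Fin n => (B * Aᵀ) p.2 p.1))
          (star fun i : Fin N =>
            star (v i) ⬝ᵥ (fun p : Fin m × Fin n => (B * Aᵀ) p.2 p.1))).PosSemidef ∧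
    (vecMulVec
        (fun i : Fin N => star (v i) ⬝ᵥ (fun p : Fin m × Fin n => (B * Aᵀ) p.2 p.1))
        (star fun i : Fin N =>
          star (v i) ⬝ᵥ (fun p : Fin m × Fin n => (B * Aᵀ) p.2 p.1))).PosSemidef :=
  rank_one_prod_lower_bound_general m n N β v C hC rstar hrstar A B
end
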